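/- arXiv:0804.3136 — 3 statements merged into one kernel-verified Lean document; each statement's English description precedes it below -/
import Mathlib

section
/- For real u with 0 < u < 1, ψ(u) = -γ - ∑_{n=1}^∞ (1-u)_n / (n · n!), where (x)_n is the Pochhammer symbol. -/
open Filter Topology Finset Real Nat Set

noncomputable def P (n : ℕ) (x : ℝ) : ℝ := (ascPochhammer ℝ n).eval x

lemma poch_eq_prod (n : ℕ) (x : ℝ) : P n x = ∏ j ∈ range n, (x + j) := by
  induction n with
  | zero => simp [P, ascPochhammer_zero]
  | succ n ih => rw [P, ascPochhammer_succ_eval, prod_range_succ, ← P, ih]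

lemma poch_pos {x : ℝ} (hx : 0 < x) (n : ℕ) : 0 < P n x := by
  rw [poch_eq_prod]
  exact prod_pos fun j _ => by positivity

lemma poch_le_factorial {x : ℝ} (hx0 : 0 < x) (hx1 : x ≤ 1) (n : ℕ) :
    P n x ≤ (n ! : ℝ) := by
  induction n with
  | zero => simp [P, ascPochhammer_zero]
  | succ n ih =>
      rw [P, ascPochhammer_succ_eval, ← P, Nat.factorial_succ]
      push_cast
      have h1 : x + n ≤ n + 1 := by linarith
      have := poch_pos hx0 n
      nlinarith [show (0:ℝ) < (n ! : ℝ) from Nat.cast_pos.mpr n.factorial_pos]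

lemma tendsto_poch_div_factorial {x : ℝ} (hx0 : 0 < x) (hx1 : x < 1) :
    Tendsto (fun n : ℕ => P (n + 1) x / ((n + 1)! : ℝ)) atTop (𝓝 0) := by
  have hG : Tendsto (Real.GammaSeq x) atTop (𝓝 (Real.Gamma x)) :=
    Real.GammaSeq_tendsto_Gamma x
  have hGne : Real.Gamma x ≠ 0 := (Real.Gamma_pos_of_pos hx0).ne'
  have h1 : Tendsto (fun n : ℕ => ((n : ℝ) ^ x / (n + 1)) * (Real.GammaSeq x n)⁻¹)
      atTop (𝓝 (0 * (Real.Gamma x)⁻¹)) := by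
    refine Tendsto.mul ?_ (hG.inv₀ hGne)
    have hub : Tendsto (fun n : ℕ => (n : ℝ) ^ (x - 1)) atTop (𝓝 0) := by
      have := tendsto_rpow_neg_atTop (y := 1 - x) (by linarith)
      have := this.comp tendsto_natCast_atTop_atTop (α := ℕ)
      simpa [neg_sub, Function.comp_def] using this
    refine squeeze_zero' ?_ ?_ hub
    · filter_upwards with n
      positivity
    · filter_upwards [eventually_ge_atTop 1] with n hn
      have hn' : (1:ℝ) ≤ (n:ℝ) := by exact_mod_cast hn
      rw [div_le_iff₀ (by positivity), Real.rpow_sub (by linarith), Real.rpow_one]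
      rw [div_mul_eq_mul_div, le_div_iff₀ (by linarith)]
      have : (n:ℝ) ^ x ≤ (n:ℝ)^x := le_rfl
      nlinarith [Real.rpow_pos_of_pos (show (0:ℝ) < n by linarith) x]
  rw [zero_mul] at h1
  refine h1.congr' ?_
  filter_upwards [eventually_ge_atTop 1] with n hn
  have hPn : P (n+1) x = ∏ j ∈ range (n+1), (x + j) := poch_eq_prod _ _
  have hprodpos : (0:ℝ) < ∏ j ∈ range (n+1), (x + j) := by
    rw [← hPn]; exact poch_pos hx0 _
  have hnpos : (0:ℝ) < (n:ℝ) := by exact_mod_cast hn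
  rw [Real.GammaSeq]
  rw [← hPn] at hprodpos ⊢
  have hfac : ((n+1)! : ℝ) = (n+1) * n ! := by
    rw [Nat.factorial_succ]; push_cast; ring
  field_simp
  rw [hfac]

lemma hasSum_telescope_of_nonneg (f c : ℕ → ℝ) (hfc : ∀ n, f n = c n - c (n + 1))
    (hf : ∀ n, 0 ≤ f n) (hlim : Tendsto c atTop (𝓝 0)) : HasSum f (c 0) := by
  rw [hasSum_iff_tendsto_nat_of_nonneg hf]
  have : ∀ n, ∑ i ∈ range n, f i = c 0 - c n := by
    intro n
    calc ∑ i ∈ range n, f i = ∑ i ∈ range n, (c i - c (i+1)) := by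
          exact Finset.sum_congr rfl fun i _ => hfc i
      _ = c 0 - c n := Finset.sum_range_sub' c n
  simp only [this]
  simpa using tendsto_const_nhds.sub hlim

lemma poch_succ_eval (n : ℕ) (x : ℝ) : P (n+1) x = P n x * (x + n) := by
  rw [P, ascPochhammer_succ_eval, ← P]

noncomputable def d (x : ℝ) (m k : ℕ) : ℝ := P (m + 1) x * ((k ! : ℝ) / ((m + k + 2)! : ℝ))

lemma d_nonneg {x : ℝ} (hx : 0 < x) (m k : ℕ) : 0 ≤ d x m k := by
  have := poch_pos hx (m+1)
  have : (0:ℝ) < (k ! : ℝ) := Nat.cast_pos.mpr k.factorial_pos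
  unfold d; positivity

/-- B2 : sum over k -/
lemma hasSum_d_k {x : ℝ} (hx0 : 0 < x) (m : ℕ) :
    HasSum (fun k => d x m k) (P (m + 1) x / (((m:ℝ) + 1) * ((m + 1)! : ℝ))) := by
  have key : HasSum (fun k : ℕ => (k ! : ℝ) / ((m + k + 2)! : ℝ))
      (1 / (((m:ℝ) + 1) * ((m + 1)! : ℝ))) := by
    have e0 : (1 : ℝ) / (((m:ℝ) + 1) * ((m + 1)! : ℝ))
        = (fun k : ℕ => (k ! : ℝ) / (((m:ℝ) + 1) * ((m + k + 1)! : ℝ))) 0 := by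
      simp
    rw [e0]
    refine hasSum_telescope_of_nonneg _
      (fun k : ℕ => (k ! : ℝ) / (((m:ℝ) + 1) * ((m + k + 1)! : ℝ))) ?_ ?_ ?_
    · intro k
      have h1 : ((m + k + 2)! : ℝ) = ((m:ℝ) + k + 2) * ((m + k + 1)! : ℝ) := by
        rw [show m + k + 2 = (m + k + 1) + 1 from rfl, Nat.factorial_succ]
        push_cast; ring
      have h2 : ((k+1)! : ℝ) = ((k:ℝ) + 1) * (k ! : ℝ) := by
        rw [Nat.factorial_succ]; push_cast; ring
      have hp1 : (0:ℝ) < ((m + k + 1)! : ℝ) := Nat.cast_pos.mpr (Nat.factorial_pos _)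
      have hp2 : (0:ℝ) < ((m + k + 2)! : ℝ) := Nat.cast_pos.mpr (Nat.factorial_pos _)
      rw [show m + (k+1) + 1 = m + k + 2 from by ring]
      field_simp
      rw [h1, h2]
      ring
    · intro k; positivity
    · have hb : ∀ k : ℕ, (k ! : ℝ) / (((m:ℝ) + 1) * ((m + k + 1)! : ℝ))
          ≤ 1 / (((m:ℝ)+1) * ((k:ℝ) + 1)) := by
        intro k
        have hfle : ((k+1)! : ℝ) ≤ ((m + k + 1)! : ℝ) := by
          exact_mod_cast Nat.factorial_le (by omega)
        have h2 : ((k+1)! : ℝ) = ((k:ℝ) + 1) * (k ! : ℝ) := by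
          rw [Nat.factorial_succ]; push_cast; ring
        have hp1 : (0:ℝ) < ((m + k + 1)! : ℝ) := Nat.cast_pos.mpr (Nat.factorial_pos _)
        have hkf : (0:ℝ) < (k ! : ℝ) := Nat.cast_pos.mpr k.factorial_pos
        rw [div_le_div_iff₀ (by positivity) (by positivity)]
        have : ((k:ℝ)+1) * (k ! : ℝ) ≤ ((m + k + 1)! : ℝ) := by rw [← h2]; exact hfle
        nlinarith
      refine squeeze_zero (fun k => by positivity) hb ?_
      have : Tendsto (fun k : ℕ => ((k:ℝ) + 1)⁻¹) atTop (𝓝 0) := by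
        exact tendsto_one_div_add_atTop_nhds_zero_nat.congr (fun k => by rw [one_div])
      have h := this.const_mul (((m:ℝ)+1))⁻¹
      rw [mul_zero] at h
      refine h.congr fun k => ?_
      rw [one_div, mul_inv]
  have h := key.mul_left (P (m + 1) x)
  rw [mul_one_div] at h
  exact h

/-- B1 : sum over m -/
lemma hasSum_d_m {x : ℝ} (hx0 : 0 < x) (hx1 : x < 1) (k : ℕ) :
    HasSum (fun m => d x m k) (x / (((k:ℝ) + 1) * ((k:ℝ) + 1 - x))) := by
  set c : ℕ → ℝ := fun m => P (m + 1) x * (k ! : ℝ) / (((m + k + 1)! : ℝ) * ((k:ℝ) + 1 - x)) with hc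
  have hkx : (0:ℝ) < (k:ℝ) + 1 - x := by linarith
  have hval : x / (((k:ℝ) + 1) * ((k:ℝ) + 1 - x)) = c 0 := by
    simp only [hc]
    rw [show (0:ℕ) + 1 = 1 from rfl, show (0:ℕ) + k + 1 = k + 1 from by omega]
    have h2 : ((k+1)! : ℝ) = ((k:ℝ) + 1) * (k ! : ℝ) := by
      rw [Nat.factorial_succ]; push_cast; ring
    have hP1 : P 1 x = x := by
      rw [show (1:ℕ) = 0 + 1 from rfl, poch_succ_eval]
      simp [P, ascPochhammer_zero]
    rw [hP1, h2]
    have hkf : (0:ℝ) < (k ! : ℝ) := Nat.cast_pos.mpr k.factorial_pos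
    field_simp
  rw [hval]
  apply hasSum_telescope_of_nonneg
  · intro m
    simp only [hc]
    have h1 : ((m + 1 + k + 1)! : ℝ) = ((m:ℝ) + k + 2) * ((m + k + 1)! : ℝ) := by
      rw [show m + 1 + k + 1 = (m + k + 1) + 1 from by ring, Nat.factorial_succ]
      push_cast; ring
    have hP : P (m + 1 + 1) x = P (m + 1) x * (x + ((m:ℝ) + 1)) := by
      rw [poch_succ_eval]; push_cast; ring_nf
    have hp1 : (0:ℝ) < ((m + k + 1)! : ℝ) := Nat.cast_pos.mpr (Nat.factorial_pos _)
    have hp2 : (0:ℝ) < ((m + k + 2)! : ℝ) := Nat.cast_pos.mpr (Nat.factorial_pos _)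
    rw [hP, h1]
    unfold d
    rw [show m + k + 2 = (m+k+1)+1 from rfl, Nat.factorial_succ]
    push_cast
    field_simp
    ring
  · intro m; exact d_nonneg hx0 m k
  · have hb : ∀ m : ℕ, c m ≤ (P (m + 1) x / ((m + 1)! : ℝ)) * (((k:ℝ) + 1 - x))⁻¹ := by
      intro m
      have hdvd : (k ! * (m+1)!) ∣ (m + k + 1)! := by
        have := Nat.factorial_mul_factorial_dvd_factorial_add k (m+1)
        rwa [show k + (m+1) = m + k + 1 from by ring] at this
      have hle : ((k ! * (m+1)! : ℕ) : ℝ) ≤ ((m + k + 1)! : ℝ) :=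
        Nat.cast_le.mpr (Nat.le_of_dvd (Nat.factorial_pos _) hdvd)
      have hp1 : (0:ℝ) < ((m + k + 1)! : ℝ) := Nat.cast_pos.mpr (Nat.factorial_pos _)
      have hp3 : (0:ℝ) < ((m+1)! : ℝ) := Nat.cast_pos.mpr (Nat.factorial_pos _)
      have hkf : (0:ℝ) < (k ! : ℝ) := Nat.cast_pos.mpr k.factorial_pos
      have hPp : 0 < P (m+1) x := poch_pos hx0 _
      have key2 : P (m+1) x * (k ! : ℝ) / ((m+k+1)! : ℝ) ≤ P (m+1) x / ((m+1)! : ℝ) := by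
        rw [div_le_div_iff₀ hp1 hp3]
        push_cast at hle
        nlinarith
      simp only [hc]
      rw [← div_div, ← div_eq_mul_inv]
      gcongr
    have hlim0 : Tendsto (fun m : ℕ => (P (m + 1) x / ((m + 1)! : ℝ)) * (((k:ℝ) + 1 - x))⁻¹)
        atTop (𝓝 0) := by
      have := (tendsto_poch_div_factorial hx0 hx1).mul_const ((((k:ℝ) + 1 - x))⁻¹)
      simpa using this
    have hnn : ∀ m : ℕ, 0 ≤ c m := by
      intro m
      have hPp : 0 < P (m+1) x := poch_pos hx0 _
      have hp1 : (0:ℝ) < ((m + k + 1)! : ℝ) := Nat.cast_pos.mpr (Nat.factorial_pos _)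
      have hkf : (0:ℝ) < (k ! : ℝ) := Nat.cast_pos.mpr k.factorial_pos
      simp only [hc]; positivity
    exact squeeze_zero hnn hb hlim0

lemma summable_g {x : ℝ} (hx0 : 0 < x) (hx1 : x < 1) :
    Summable (fun k : ℕ => x / (((k:ℝ) + 1) * ((k:ℝ) + 1 - x))) := by
  have hs : Summable (fun k : ℕ => (x / (1 - x)) * (1 / ((k:ℝ) + 1) ^ 2)) := by
    have h2 : Summable (fun n : ℕ => 1 / (n:ℝ) ^ 2) :=
      Real.summable_one_div_nat_pow.mpr (by norm_num)
    have h3 : Summable (fun n : ℕ => 1 / ((n:ℝ) + 1) ^ 2) := by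
      have := (summable_nat_add_iff 1).mpr h2
      refine this.congr fun n => by push_cast; ring
    exact h3.mul_left _
  refine Summable.of_nonneg_of_le (fun k => ?_) (fun k => ?_) hs
  · have : (0:ℝ) < (k:ℝ) + 1 - x := by linarith [Nat.cast_nonneg (α := ℝ) k]
    positivity
  · have hk0 : (0:ℝ) ≤ (k:ℝ) := Nat.cast_nonneg k
    have h1 : (0:ℝ) < (k:ℝ) + 1 - x := by linarith
    have hxp : (0:ℝ) < 1 - x := by linarith
    have h5 : (1 - x) * ((k:ℝ)+1)^2 ≤ ((k:ℝ)+1) * ((k:ℝ)+1-x) := by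
      nlinarith [mul_nonneg (mul_nonneg hx0.le hk0) (by linarith : (0:ℝ) ≤ (k:ℝ)+1)]
    calc x / (((k:ℝ) + 1) * ((k:ℝ) + 1 - x)) ≤ x / ((1 - x) * ((k:ℝ)+1)^2) := by
          apply div_le_div_of_nonneg_left hx0.le (by positivity) 
          exact h5
      _ = x / (1 - x) * (1 / ((k:ℝ) + 1) ^ 2) := by rw [mul_one_div, div_div]

lemma tsum_swap {x : ℝ} (hx0 : 0 < x) (hx1 : x < 1) :
    (∑' k : ℕ, x / (((k:ℝ) + 1) * ((k:ℝ) + 1 - x)))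
      = ∑' m : ℕ, P (m + 1) x / (((m:ℝ) + 1) * ((m + 1)! : ℝ)) := by
  have hsum : Summable (fun p : ℕ × ℕ => d x p.2 p.1) := by
    refine (summable_prod_of_nonneg (fun p => d_nonneg hx0 _ _)).mpr
      ⟨fun k => (hasSum_d_m hx0 hx1 k).summable, ?_⟩
    refine ((summable_g hx0 hx1).congr fun k => ?_)
    exact ((hasSum_d_m hx0 hx1 k).tsum_eq).symm
  have hcomm : (∑' (m : ℕ) (k : ℕ), d x m k) = ∑' (k : ℕ) (m : ℕ), d x m k :=
    Summable.tsum_comm (f := fun k m => d x m k) hsum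
  calc (∑' k : ℕ, x / (((k:ℝ) + 1) * ((k:ℝ) + 1 - x)))
      = ∑' (k : ℕ) (m : ℕ), d x m k :=
        tsum_congr fun k => ((hasSum_d_m hx0 hx1 k).tsum_eq).symm
    _ = ∑' (m : ℕ) (k : ℕ), d x m k := hcomm.symm
    _ = ∑' m : ℕ, P (m + 1) x / (((m:ℝ) + 1) * ((m + 1)! : ℝ)) :=
        tsum_congr fun m => (hasSum_d_k hx0 m).tsum_eq

local notation "γ" => Real.eulerMascheroniConstant

lemma digamma_eq_tsum (u : ℝ) (hu0 : 0 < u) (hu1 : u < 1) :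
    deriv Real.Gamma u / Real.Gamma u
      = -γ + ∑' k : ℕ, (1 / ((k:ℝ) + 1) - 1 / ((k:ℝ) + u)) := by
  set f : ℝ → ℝ := fun x => Real.log (Real.Gamma x) with hf
  have hc : ConvexOn ℝ (Ioi 0) f := Real.convexOn_log_Gamma
  have hder : ∀ {x : ℝ}, 0 < x → DifferentiableAt ℝ f x := by
    intro x hx
    refine ((Real.differentiableAt_Gamma ?_).log (Real.Gamma_ne_zero ?_)) <;>
      exact fun m => ne_of_gt (by have : (0:ℝ) ≤ (m:ℝ) := Nat.cast_nonneg m; linarith)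
  have hderiv_eq : ∀ {x : ℝ}, 0 < x → deriv f x = deriv Real.Gamma x / Real.Gamma x := by
    intro x hx
    exact deriv.log (Real.differentiableAt_Gamma (fun m => ne_of_gt
        (by have : (0:ℝ) ≤ (m:ℝ) := Nat.cast_nonneg m; linarith)))
      (Real.Gamma_ne_zero (fun m => ne_of_gt
        (by have : (0:ℝ) ≤ (m:ℝ) := Nat.cast_nonneg m; linarith)))
  -- recurrence
  have hder_rec : ∀ x : ℝ, 0 < x → deriv f (x + 1) = deriv f x + 1 / x := by
    intro x hx
    rw [← deriv_comp_add_const, one_div, ← Real.deriv_log,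
      ← deriv_add (hder (by positivity)) (Real.differentiableAt_log hx.ne')]
    apply Filter.EventuallyEq.deriv_eq
    filter_upwards [eventually_gt_nhds hx] with y hy
    simp only [hf]
    rw [Real.Gamma_add_one hy.ne', Real.log_mul hy.ne' (Real.Gamma_pos_of_pos hy).ne', add_comm]
    rfl
  have hder_nat : ∀ (v : ℝ), 0 < v → ∀ n : ℕ,
      deriv f (v + n) = deriv f v + ∑ k ∈ range n, 1 / (v + k) := by
    intro v hv n
    induction n with
    | zero => simp
    | succ n ih =>
        have h1 : v + (n + 1 : ℕ) = (v + n) + 1 := by push_cast; ring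
        rw [h1, hder_rec (v + n) (by positivity), ih, sum_range_succ]
        ring
  -- monotonicity of deriv f
  have hmono : ∀ a b : ℝ, 0 < a → a < b → deriv f a ≤ deriv f b := by
    intro a b ha hab
    have hb : 0 < b := lt_trans ha hab
    have h1 := hc.deriv_le_slope (mem_Ioi.mpr ha) (mem_Ioi.mpr hb) hab (hder ha)
    have h2 := hc.slope_le_deriv (mem_Ioi.mpr ha) (mem_Ioi.mpr hb) hab (hder hb)
    linarith
  -- the series
  set t : ℕ → ℝ := fun k => 1 / ((k:ℝ) + 1) - 1 / ((k:ℝ) + u) with ht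
  have hsumm : Summable t := by
    have hg := summable_g (x := 1 - u) (by linarith) (by linarith)
    refine (hg.neg.congr fun k => ?_)
    have hk1 : ((k:ℝ) + 1) ≠ 0 := by positivity
    have hku : ((k:ℝ) + u) ≠ 0 := by positivity
    rw [ht]
    have h9 : (k:ℝ) + 1 - (1 - u) = (k:ℝ) + u := by ring
    rw [h9]
    field_simp
    ring
  have hL := hsumm.hasSum.tendsto_sum_nat
  set L := ∑' k : ℕ, t k with hLdef
  -- bounds
  have key : deriv f u = deriv f 1 + L := by
    have upper : ∀ n : ℕ, deriv f u - deriv f 1 ≤ ∑ k ∈ range n, t k := by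
      intro n
      have h1 := hder_nat u hu0 n
      have h2 := hder_nat 1 one_pos n
      have h3 : deriv f (u + n) ≤ deriv f (1 + n) := by
        rcases eq_or_lt_of_le (le_refl (0:ℕ)) with h | h
        · exact hmono _ _ (by positivity) (by push_cast; linarith)
        · exact hmono _ _ (by positivity) (by push_cast; linarith)
      rw [h1, h2] at h3
      have : ∑ k ∈ range n, t k = ∑ k ∈ range n, 1 / ((1:ℝ) + k) - ∑ k ∈ range n, 1 / (u + k) := by
        rw [← sum_sub_distrib]
        exact sum_congr rfl fun k _ => by rw [ht]; ring_nf
      rw [this]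
      linarith
    have lower : ∀ n : ℕ, (∑ k ∈ range (n+1), t k) - 1 / ((n:ℝ)+1) ≤ deriv f u - deriv f 1 := by
      intro n
      have h1 := hder_nat u hu0 (n+1)
      have h2 := hder_nat 1 one_pos n
      have h3 : deriv f (1 + n) ≤ deriv f (u + (n+1 : ℕ)) := by
        apply hmono _ _ (by positivity)
        push_cast; linarith
      rw [h1, h2] at h3
      have e1 : ∑ k ∈ range (n+1), t k
          = (∑ k ∈ range (n+1), 1 / ((1:ℝ) + k)) - ∑ k ∈ range (n+1), 1 / (u + k) := by
        rw [← sum_sub_distrib]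
        exact sum_congr rfl fun k _ => by rw [ht]; ring_nf
      have e2 : ∑ k ∈ range (n+1), 1 / ((1:ℝ) + k)
          = (∑ k ∈ range n, 1 / ((1:ℝ) + k)) + 1 / ((n:ℝ)+1) := by
        rw [sum_range_succ]
        congr 1
        rw [add_comm]
      rw [e1, e2]
      linarith
    have tendsto_upper : Tendsto (fun n => ∑ k ∈ range n, t k) atTop (𝓝 L) := hL
    have hub : deriv f u - deriv f 1 ≤ L :=
      ge_of_tendsto tendsto_upper (Filter.Eventually.of_forall upper)
    have hlb : L ≤ deriv f u - deriv f 1 := by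
      have htend : Tendsto (fun n : ℕ => (∑ k ∈ range (n+1), t k) - 1 / ((n:ℝ)+1))
          atTop (𝓝 (L - 0)) := by
        refine Tendsto.sub (hL.comp (tendsto_add_atTop_nat 1)) ?_
        exact tendsto_one_div_add_atTop_nhds_zero_nat
      rw [sub_zero] at htend
      exact le_of_tendsto htend (Filter.Eventually.of_forall lower)
    linarith
  have hf1 : deriv f 1 = -γ := by
    rw [hderiv_eq one_pos, Real.Gamma_one, div_one,
      Real.eulerMascheroniConstant_eq_neg_deriv, neg_neg]
  rw [← hderiv_eq hu0, key, hf1]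


theorem digamma_series (u : ℝ) (hu0 : 0 < u) (hu1 : u < 1) :
    deriv Real.Gamma u / Real.Gamma u
      = -Real.eulerMascheroniConstant
        - ∑' n : ℕ, (ascPochhammer ℝ (n + 1)).eval (1 - u) / (((n : ℝ) + 1) * (Nat.factorial (n + 1) : ℝ)) := by
  rw [digamma_eq_tsum u hu0 hu1]
  have hx0 : (0:ℝ) < 1 - u := by linarith
  have hx1 : (1:ℝ) - u < 1 := by linarith
  have h1 : (∑' k : ℕ, (1 / ((k:ℝ) + 1) - 1 / ((k:ℝ) + u)))
      = -∑' k : ℕ, (1 - u) / (((k:ℝ) + 1) * ((k:ℝ) + 1 - (1 - u))) := by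
    rw [← tsum_neg]
    refine tsum_congr fun k => ?_
    have hk1 : ((k:ℝ) + 1) ≠ 0 := by positivity
    have hku : ((k:ℝ) + u) ≠ 0 := by positivity
    have h9 : (k:ℝ) + 1 - (1 - u) = (k:ℝ) + u := by ring
    rw [h9]
    field_simp
    ring
  rw [h1, tsum_swap hx0 hx1, sub_eq_add_neg]
  rfl
end

section
/- For real u with 0 < u < 1, ψ(u) = -γ - ∑_{n=1}^∞ 1/(n² · B(n, 1-u)), where B denotes the Beta function. -/
open Filter Topology Finset Set

local notation "γ" => Real.eulerMascheroniConstant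



noncomputable def dbcP (u : ℝ) (n : ℕ) : ℝ := ∏ k ∈ Finset.range n, (1 - u / (k + 1))

lemma dbcP_succ (u : ℝ) (n : ℕ) : dbcP u (n+1) = dbcP u n * (1 - u / (n+1)) :=
  Finset.prod_range_succ _ _

lemma dbcP_pos {u : ℝ} (hu1 : u < 1) (n : ℕ) : 0 < dbcP u n := by
  apply Finset.prod_pos
  intro k _
  have hk : (1:ℝ) ≤ (k:ℝ) + 1 := by have := Nat.cast_nonneg (α:=ℝ) k; linarith
  have h2 : u / ((k:ℝ)+1) < 1 := by
    rw [div_lt_one (by positivity)]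
    linarith
  linarith

lemma dbcP_tendsto_zero {u : ℝ} (hu0 : 0 < u) (hu1 : u < 1) :
    Tendsto (dbcP u) atTop (𝓝 0) := by
  have hb : ∀ n, dbcP u n ≤ Real.exp (-u * ∑ k ∈ Finset.range n, 1/((k:ℝ)+1)) := by
    intro n
    rw [Finset.mul_sum, Real.exp_sum]
    apply Finset.prod_le_prod
    · intro k _
      have h2 : u / ((k:ℝ)+1) < 1 := by
        rw [div_lt_one (by positivity)]; have : (0:ℝ) ≤ (k:ℝ) := Nat.cast_nonneg k
        linarith
      linarith
    · intro k _
      have := Real.add_one_le_exp (-u * (1/((k:ℝ)+1)))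
      rw [neg_mul, mul_one_div] at this ⊢
      linarith
  apply squeeze_zero (fun n => (dbcP_pos hu1 n).le) hb
  apply Real.tendsto_exp_atBot.comp
  have h1 : Tendsto (fun n => ∑ k ∈ Finset.range n, 1/((k:ℝ)+1)) atTop atTop :=
    Real.tendsto_sum_range_one_div_nat_succ_atTop
  exact (tendsto_const_mul_atBot_of_neg (by linarith)).mpr h1





noncomputable def dbF (u : ℝ) (m n : ℕ) : ℝ :=
  dbcP u (n+1) * ((m.factorial : ℝ) * ((n+1).factorial : ℝ) / ((m+n+2).factorial : ℝ))

lemma dbc_row (u : ℝ) (hu0 : 0 < u) (m : ℕ) (N : ℕ) :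
    ∑ n ∈ Finset.range N, dbF u m n
      = (1/(u+m) - 1/(m+1))
        - dbcP u (N+1) * (((N+1).factorial : ℝ) * (m.factorial : ℝ)
            / (((m+N+1).factorial : ℝ) * (u+m))) := by
  have hum : (0:ℝ) < u + m := by positivity
  induction N with
  | zero =>
      simp only [Finset.range_zero, Finset.sum_empty]
      rw [show dbcP u 1 = 1 - u by simp [dbcP]]
      have h1 : ((m+1).factorial : ℝ) = (m+1) * m.factorial := by
        rw [Nat.factorial_succ]; push_cast; ring
      rw [show m + 0 + 1 = m + 1 from rfl, h1]
      have hm : (0:ℝ) < (m:ℝ) + 1 := by positivity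
      have hf : (0:ℝ) < (m.factorial : ℝ) := by exact_mod_cast m.factorial_pos
      field_simp
      ring
  | succ N ih =>
      rw [Finset.sum_range_succ, ih]
      have key : dbF u m N
          = dbcP u (N+1) * (((N+1).factorial : ℝ) * (m.factorial : ℝ)
              / (((m+N+1).factorial : ℝ) * (u+m)))
            - dbcP u (N+2) * (((N+2).factorial : ℝ) * (m.factorial : ℝ)
              / (((m+N+2).factorial : ℝ) * (u+m))) := by
        rw [show dbcP u (N+2) = dbcP u (N+1) * (1 - u/(N+2)) by
              rw [show N+2 = (N+1)+1 from rfl, dbcP_succ]; push_cast; ring_nf]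
        rw [dbF]
        have h1 : ((m+N+2).factorial : ℝ) = ((m:ℝ)+N+2) * ((m+N+1).factorial : ℝ) := by
          rw [show m+N+2 = (m+N+1)+1 from rfl, Nat.factorial_succ]; push_cast; ring
        have h2 : ((N+2).factorial : ℝ) = ((N:ℝ)+2) * ((N+1).factorial : ℝ) := by
          rw [show N+2 = (N+1)+1 from rfl, Nat.factorial_succ]; push_cast; ring
        rw [h1, h2]
        have hf1 : (0:ℝ) < ((m+N+1).factorial : ℝ) := by exact_mod_cast (m+N+1).factorial_pos
        have hN2 : (0:ℝ) < (N:ℝ)+2 := by positivity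
        have hmn2 : (0:ℝ) < (m:ℝ)+N+2 := by positivity
        field_simp
        ring
      rw [key]
      ring



lemma dbc_col (u : ℝ) (n : ℕ) (M : ℕ) :
    ∑ m ∈ Finset.range M, dbF u m n
      = dbcP u (n+1) / (n+1)
        * (1 - ((M.factorial : ℝ) * ((n+1).factorial : ℝ) / ((M+n+1).factorial : ℝ))) := by
  induction M with
  | zero =>
      simp only [Finset.range_zero, Finset.sum_empty, Nat.zero_add, Nat.factorial_zero]
      have h : ((n+1).factorial:ℝ) ≠ 0 := by exact_mod_cast (n+1).factorial_ne_zero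
      rw [Nat.cast_one, one_mul, div_self h]
      ring
  | succ M ih =>
      rw [Finset.sum_range_succ, ih]
      have key : dbF u M n = dbcP u (n+1) / (n+1) *
          (((M.factorial : ℝ) * ((n+1).factorial : ℝ) / ((M+n+1).factorial : ℝ))
           - (((M+1).factorial : ℝ) * ((n+1).factorial : ℝ) / ((M+1+n+1).factorial : ℝ))) := by
        rw [dbF]
        have h1 : ((M+1+n+1).factorial : ℝ) = ((M:ℝ)+n+2) * ((M+n+1).factorial : ℝ) := by
          rw [show M+1+n+1 = (M+n+1)+1 by ring, Nat.factorial_succ]; push_cast; ring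
        have h2 : ((M+1).factorial : ℝ) = ((M:ℝ)+1) * (M.factorial : ℝ) := by
          rw [Nat.factorial_succ]; push_cast; ring
        have h3 : (M+n+2) = (M+1+n+1) := by ring
        rw [h1, h2, h3, h1]
        have hf1 : (0:ℝ) < ((M+n+1).factorial : ℝ) := by exact_mod_cast (M+n+1).factorial_pos
        have hn1 : (0:ℝ) < (n:ℝ)+1 := by positivity
        have hmn2 : (0:ℝ) < (M:ℝ)+n+2 := by positivity
        field_simp
        ring
      rw [key]
      ring

-- remainder bound for columns: M!*(n+1)!/(M+n+1)! ≤ (n+1)!/(M+1)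
lemma dbc_colrem_tendsto (n : ℕ) :
    Tendsto (fun M : ℕ => (M.factorial : ℝ) * ((n+1).factorial : ℝ) / ((M+n+1).factorial : ℝ))
      atTop (𝓝 0) := by
  apply squeeze_zero (fun M => by positivity) (g := fun M : ℕ => ((n+1).factorial : ℝ) / (M+1))
  · intro M
    rw [div_le_div_iff₀ (by positivity) (by positivity)]
    have h : ((M+1).factorial : ℝ) ≤ ((M+n+1).factorial : ℝ) := by
      exact_mod_cast Nat.factorial_le (by omega)
    have h3 : ((M+1).factorial : ℝ) = ((M:ℝ)+1) * (M.factorial : ℝ) := by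
      rw [Nat.factorial_succ]; push_cast; ring
    rw [h3] at h
    have hfn : (0:ℝ) < ((n+1).factorial : ℝ) := by exact_mod_cast (n+1).factorial_pos
    nlinarith [hfn, (by positivity : (0:ℝ) < (M:ℝ)+1)]
  · have := tendsto_one_div_add_atTop_nhds_zero_nat.const_mul (((n+1).factorial : ℝ))
    rw [mul_zero] at this
    simpa [div_eq_mul_inv] using this








variable {u : ℝ} (hu0 : 0 < u) (hu1 : u < 1)

lemma dbF_nonneg (hu1 : u < 1) (m n : ℕ) : 0 ≤ dbF u m n := by
  have := dbcP_pos hu1 (n+1); unfold dbF; positivity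

lemma dbc_hasSum_col (hu0 : 0 < u) (hu1 : u < 1) (m : ℕ) :
    HasSum (fun n => dbF u m n) (1/(u+(m:ℝ)) - 1/((m:ℝ)+1)) := by
  rw [hasSum_iff_tendsto_nat_of_nonneg (dbF_nonneg hu1 m)]
  have hrem : Tendsto (fun N : ℕ => dbcP u (N+1) * (((N+1).factorial : ℝ) * (m.factorial : ℝ)
      / (((m+N+1).factorial : ℝ) * (u+m)))) atTop (𝓝 0) := by
    have hum : (0:ℝ) < u + m := by positivity
    apply squeeze_zero (g := fun N : ℕ => dbcP u (N+1) * (1/(u+m)))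
    · intro N
      have := dbcP_pos hu1 (N+1); positivity
    · intro N
      apply mul_le_mul_of_nonneg_left _ (dbcP_pos hu1 (N+1)).le
      rw [div_le_div_iff₀ (by positivity) (by positivity), one_mul]
      have h : ((N+1).factorial : ℝ) * (m.factorial : ℝ) ≤ ((m+N+1).factorial : ℝ) := by
        have := Nat.factorial_mul_factorial_dvd_factorial_add (N+1) m
        have hle : (N+1).factorial * m.factorial ≤ (N+1+m).factorial :=
          Nat.le_of_dvd (Nat.factorial_pos _) this
        rw [show N+1+m = m+N+1 by ring] at hle
        exact_mod_cast hle
      nlinarith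
    · have h1 := (dbcP_tendsto_zero hu0 hu1).comp (tendsto_add_atTop_nat 1)
      have := h1.mul_const (1/(u+(m:ℝ)))
      simpa using this
  have := (tendsto_const_nhds (x := 1/(u+(m:ℝ)) - 1/((m:ℝ)+1)) (f := atTop (α := ℕ))).sub hrem
  rw [sub_zero] at this
  apply this.congr
  intro N
  rw [dbc_row u hu0 m N]

lemma dbc_hasSum_row (hu0 : 0 < u) (hu1 : u < 1) (n : ℕ) :
    HasSum (fun m => dbF u m n) (dbcP u (n+1) / ((n:ℝ)+1)) := by
  rw [hasSum_iff_tendsto_nat_of_nonneg (fun m => dbF_nonneg hu1 m n)]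
  have := ((tendsto_const_nhds (x := (1:ℝ)) (f := atTop (α := ℕ))).sub
    (dbc_colrem_tendsto n)).const_mul (dbcP u (n+1) / ((n:ℝ)+1))
  rw [sub_zero, mul_one] at this
  apply this.congr
  intro M
  rw [dbc_col u n M]

lemma dbc_summable_col (hu0 : 0 < u) (hu1 : u < 1) :
    Summable (fun m : ℕ => 1/(u+(m:ℝ)) - 1/((m:ℝ)+1)) := by
  have hsq : Summable (fun m : ℕ => (1/u) * (1/((m:ℝ)+1)^2)) := by
    apply Summable.mul_left
    have := (summable_nat_add_iff (f := fun n : ℕ => 1/((n:ℝ))^2) 1).mpr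
      ((Real.summable_one_div_nat_pow (p := 2)).mpr one_lt_two)
    apply this.congr
    intro m; push_cast; ring
  apply Summable.of_nonneg_of_le _ _ hsq
  · intro m
    have hum : (0:ℝ) < u + m := by positivity
    have hm1 : (0:ℝ) < (m:ℝ) + 1 := by positivity
    rw [sub_nonneg]
    exact one_div_le_one_div_of_le hum (by linarith)
  · intro m
    have hum : (0:ℝ) < u + m := by positivity
    have hm1 : (0:ℝ) < (m:ℝ) + 1 := by positivity
    have key : u * ((m:ℝ)+1) ≤ u + m := by nlinarith [(m.cast_nonneg : (0:ℝ) ≤ m)]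
    have e1 : 1/(u+(m:ℝ)) - 1/((m:ℝ)+1) = (1-u)/((u+(m:ℝ))*((m:ℝ)+1)) := by
      field_simp
      ring
    rw [e1]
    calc (1-u)/((u+(m:ℝ))*((m:ℝ)+1)) ≤ 1/((u+(m:ℝ))*((m:ℝ)+1)) := by
          gcongr
          linarith
      _ ≤ 1/(u*((m:ℝ)+1)^2) := by
          apply one_div_le_one_div_of_le (by positivity)
          nlinarith [key, hm1]
      _ = 1/u * (1/((m:ℝ)+1)^2) := (one_div_mul_one_div u _).symm

lemma dbc_sum_swap (hu0 : 0 < u) (hu1 : u < 1) :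
    ∑' n : ℕ, dbcP u (n+1) / ((n:ℝ)+1) = ∑' m : ℕ, (1/(u+(m:ℝ)) - 1/((m:ℝ)+1)) := by
  have hF : Summable (fun p : ℕ × ℕ => dbF u p.1 p.2) := by
    rw [summable_prod_of_nonneg (fun p => dbF_nonneg hu1 p.1 p.2)]
    constructor
    · intro m; exact (dbc_hasSum_col hu0 hu1 m).summable
    · apply (dbc_summable_col hu0 hu1).congr
      intro m
      exact ((dbc_hasSum_col hu0 hu1 m).tsum_eq).symm
  have hswap := Summable.tsum_comm (f := fun m n => dbF u m n) hF
  calc ∑' n : ℕ, dbcP u (n+1) / ((n:ℝ)+1)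
      = ∑' (n : ℕ) (m : ℕ), dbF u m n := by
        exact tsum_congr fun n => ((dbc_hasSum_row hu0 hu1 n).tsum_eq).symm
    _ = ∑' (m : ℕ) (n : ℕ), dbF u m n := hswap
    _ = ∑' m : ℕ, (1/(u+(m:ℝ)) - 1/((m:ℝ)+1)) :=
        tsum_congr fun m => (dbc_hasSum_col hu0 hu1 m).tsum_eq



lemma dbc_gamma {u : ℝ} (hu0 : 0 < u) (hu1 : u < 1) (n : ℕ) :
    Real.Gamma ((n:ℝ) + (1-u)) = dbcP u n * Real.Gamma ((n:ℝ)+1) * Real.Gamma (1-u) := by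
  induction n with
  | zero => simp [dbcP, Real.Gamma_one]
  | succ n ih =>
      have h1 : ((n+1:ℕ):ℝ) + (1-u) = ((n:ℝ) + (1-u)) + 1 := by push_cast; ring
      have h2 : (0:ℝ) < (n:ℝ) + (1-u) := by
        have : (0:ℝ) ≤ (n:ℝ) := n.cast_nonneg; linarith
      rw [h1, Real.Gamma_add_one h2.ne', ih]
      have h3 : ((n+1:ℕ):ℝ) + 1 = ((n:ℝ)+1) + 1 := by push_cast; ring
      rw [h3, Real.Gamma_add_one (by positivity : (0:ℝ) < (n:ℝ)+1).ne', dbcP_succ]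
      have hn1 : ((n:ℝ)+1) ≠ 0 := by positivity
      field_simp
      ring



lemma dgm_analytic {u : ℝ} (hu0 : 0 < u) (hu1 : u < 1)
    {L : ℝ} (hL : HasSum (fun m : ℕ => 1/(u+(m:ℝ)) - 1/((m:ℝ)+1)) L) :
    deriv Real.Gamma u / Real.Gamma u = -γ - L := by
  set f : ℝ → ℝ := Real.log ∘ Real.Gamma with hf
  have hder : ∀ {x : ℝ}, 0 < x → DifferentiableAt ℝ f x := by
    intro x hx
    refine ((Real.differentiableAt_Gamma ?_).log (Real.Gamma_ne_zero ?_)) <;>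
      exact fun m => ne_of_gt (by have : (0:ℝ) ≤ m := m.cast_nonneg; linarith)
  have hc : ConvexOn ℝ (Ioi 0) f := Real.convexOn_log_Gamma
  have hlogd : ∀ {x : ℝ}, 0 < x → deriv f x = deriv Real.Gamma x / Real.Gamma x := by
    intro x hx
    rw [hf, Function.comp_def, deriv.log (Real.differentiableAt_Gamma
      (fun m => ne_of_gt (by have : (0:ℝ) ≤ m := m.cast_nonneg; linarith)))
      (Real.Gamma_pos_of_pos hx).ne']
  have h_rec : ∀ x : ℝ, 0 < x → f (x + 1) = f x + Real.log x := by
    intro x hx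
    simp only [f, Function.comp_apply, Real.Gamma_add_one hx.ne',
      Real.log_mul hx.ne' (Real.Gamma_pos_of_pos hx).ne', add_comm]
  have hder_rec : ∀ x : ℝ, 0 < x → deriv f (x + 1) = deriv f x + 1 / x := by
    intro x hx
    rw [← deriv_comp_add_const, one_div, ← Real.deriv_log,
      ← deriv_add (hder hx) (Real.differentiableAt_log hx.ne')]
    apply Filter.EventuallyEq.deriv_eq
    filter_upwards [eventually_gt_nhds hx] using h_rec
  have hshift : ∀ N : ℕ, deriv f (u + N) = deriv f u + ∑ m ∈ range N, 1/(u+(m:ℝ)) := by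
    intro N
    induction N with
    | zero => simp
    | succ N ih =>
        have h1 : u + ((N:ℝ)+1) = (u + N) + 1 := by ring
        push_cast
        rw [h1, hder_rec _ (by positivity), ih, Finset.sum_range_succ]
        ring
  have hnat : ∀ n : ℕ, deriv f ((n:ℝ) + 1) = -γ + ∑ m ∈ range n, 1/((m:ℝ)+1) := by
    intro n
    induction n with
    | zero =>
        simp only [Nat.cast_zero, zero_add, Finset.range_zero, Finset.sum_empty, add_zero]
        rw [hlogd one_pos, Real.Gamma_one, div_one, Real.eulerMascheroniConstant_eq_neg_deriv,
          neg_neg]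
    | succ n ih =>
        push_cast
        rw [show (n:ℝ) + 1 + 1 = ((n:ℝ)+1) + 1 from rfl, hder_rec _ (by positivity), ih,
          Finset.sum_range_succ]
        ring
  have hmono := hc.monotoneOn_deriv (fun x hx => hder hx)
  have hup : ∀ N : ℕ, deriv f u + ∑ m ∈ range (N+1), 1/(u+(m:ℝ))
      ≤ -γ + ∑ m ∈ range (N+1), 1/((m:ℝ)+1) := by
    intro N
    have h1 : deriv f (u + ((N:ℝ)+1)) ≤ deriv f (((N:ℝ)+1) + 1) := by
      apply hmono (mem_Ioi.mpr (by positivity)) (mem_Ioi.mpr (by positivity))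
      linarith
    rw [show ((N:ℝ)+1+1) = ((N+1:ℕ):ℝ)+1 by push_cast; ring, hnat (N+1)] at h1
    have h2 := hshift (N+1)
    push_cast at h1 h2 ⊢
    linarith
  have hlow : ∀ N : ℕ, -γ + ∑ m ∈ range N, 1/((m:ℝ)+1)
      ≤ deriv f u + ∑ m ∈ range (N+1), 1/(u+(m:ℝ)) := by
    intro N
    have h1 : deriv f ((N:ℝ) + 1) ≤ deriv f (u + ((N:ℝ)+1)) := by
      apply hmono (mem_Ioi.mpr (by positivity)) (mem_Ioi.mpr (by positivity))
      linarith
    rw [hnat N] at h1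
    have h2 := hshift (N+1)
    push_cast at h1 h2 ⊢
    linarith
  -- A N = partial sums
  have hA : Tendsto (fun N : ℕ => ∑ m ∈ range (N+1), (1/(u+(m:ℝ)) - 1/((m:ℝ)+1)))
      atTop (𝓝 L) := hL.tendsto_sum_nat.comp (tendsto_add_atTop_nat 1)
  rw [← hlogd hu0]
  have hle : deriv f u ≤ -γ - L := by
    have ht : Tendsto (fun N : ℕ => -γ - ∑ m ∈ range (N+1), (1/(u+(m:ℝ)) - 1/((m:ℝ)+1)))
        atTop (𝓝 (-γ - L)) := tendsto_const_nhds.sub hA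
    apply ge_of_tendsto ht
    filter_upwards with N
    have := hup N
    rw [Finset.sum_sub_distrib]
    linarith
  have hge : -γ - L ≤ deriv f u := by
    have ht : Tendsto (fun N : ℕ =>
        -γ - ∑ m ∈ range (N+1), (1/(u+(m:ℝ)) - 1/((m:ℝ)+1)) - 1/((N:ℝ)+1))
        atTop (𝓝 (-γ - L - 0)) := (tendsto_const_nhds.sub hA).sub
          tendsto_one_div_add_atTop_nhds_zero_nat
    rw [sub_zero] at ht
    apply le_of_tendsto ht
    filter_upwards with N
    have h1 := hlow N
    have h2 : ∑ m ∈ range (N+1), 1/((m:ℝ)+1) = ∑ m ∈ range N, 1/((m:ℝ)+1) + 1/((N:ℝ)+1) :=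
      Finset.sum_range_succ _ _
    rw [Finset.sum_sub_distrib]
    linarith
  linarith


theorem digamma_beta_series (u : ℝ) (hu0 : 0 < u) (hu1 : u < 1) :
    deriv Real.Gamma u / Real.Gamma u
      = -Real.eulerMascheroniConstant
        - ∑' n : ℕ, 1 / (((n : ℝ) + 1) ^ 2 *
            (Real.Gamma (n + 1) * Real.Gamma (1 - u) / Real.Gamma ((n + 1) + (1 - u)))) := by
  rw [dgm_analytic hu0 hu1 (dbc_summable_col hu0 hu1).hasSum]
  congr 1
  rw [← dbc_sum_swap hu0 hu1]
  apply tsum_congr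
  intro n
  have h1 : ((n:ℝ) + 1) + (1 - u) = ((n+1:ℕ):ℝ) + (1-u) := by push_cast; ring
  rw [h1, dbc_gamma hu0 hu1 (n+1)]
  have h3 : ((n+1:ℕ):ℝ) + 1 = ((n:ℝ)+1) + 1 := by push_cast; ring
  rw [h3, Real.Gamma_add_one (by positivity : (0:ℝ) < (n:ℝ)+1).ne']
  have hc := dbcP_pos hu1 (n+1)
  have hg1 : 0 < Real.Gamma ((n:ℝ)+1) := Real.Gamma_pos_of_pos (by positivity)
  have hg2 : 0 < Real.Gamma (1-u) := Real.Gamma_pos_of_pos (by linarith)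
  have hn1 : (0:ℝ) < (n:ℝ)+1 := by positivity
  field_simp
end

section
/- log 2 = ∑_{n=1}^∞ C(2n,n) / (n · 2^(2n+1)), where C(2n,n) is the central binomial coefficient. -/
open Polynomial Finset MeasureTheory Set


lemma choose_succ_key (k : ℕ) :
    (Nat.choose (2*(k+1)) (k+1) : ℝ) * (k+1) = 2*(2*k+1) * Nat.choose (2*k) k := by
  have := congrArg (fun n : ℕ => (n : ℝ)) (Nat.succ_mul_centralBinom_succ k)
  simp only [Nat.centralBinom] at this
  push_cast at this
  linarith [this]

lemma desc_half (k : ℕ) :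
    (descPochhammer ℤ k).smeval (-(1/2) : ℝ)
      = (-(1/4))^k * (Nat.choose (2*k) k) * (Nat.factorial k) := by
  induction k with
  | zero => simp [descPochhammer_zero]
  | succ k ih =>
    rw [descPochhammer_succ_right, Polynomial.smeval_mul, ih]
    have h1 : (smeval (X - (k:ℤ[X])) (-(1/2):ℝ)) = (-(1/2):ℝ) - k := by
      simp [Polynomial.smeval_sub, Polynomial.smeval_X, Polynomial.smeval_natCast]
    rw [h1]
    have h3 : ((k+1).factorial : ℝ) = (k+1) * k.factorial := by
      rw [Nat.factorial_succ]; push_cast; ring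
    rw [h3]
    have expand : ((-(1/4):ℝ))^(k+1) * (Nat.choose (2*(k+1)) (k+1)) * (((k:ℝ)+1) * k.factorial)
        = ((-(1/4):ℝ))^(k+1) * ((Nat.choose (2*(k+1)) (k+1) : ℝ) * ((k:ℝ)+1)) * k.factorial := by
      ring
    rw [expand, choose_succ_key k]
    ring

lemma desc_negone (k : ℕ) :
    (descPochhammer ℤ k).smeval (-1 : ℝ) = (-1)^k * (Nat.factorial k) := by
  induction k with
  | zero => simp [descPochhammer_zero]
  | succ k ih =>
    rw [descPochhammer_succ_right, Polynomial.smeval_mul, ih]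
    have h1 : (smeval (X - (k:ℤ[X])) (-1:ℝ)) = (-1:ℝ) - k := by
      simp [Polynomial.smeval_sub, Polynomial.smeval_X, Polynomial.smeval_natCast]
    rw [h1, Nat.factorial_succ]
    push_cast
    ring

lemma ring_choose_half (k : ℕ) :
    Ring.choose (-(1/2) : ℝ) k = (-(1/4))^k * (Nat.choose (2*k) k) := by
  have h := Ring.descPochhammer_eq_factorial_smul_choose (-(1/2) : ℝ) k
  rw [desc_half, nsmul_eq_mul] at h
  have hk : (k.factorial : ℝ) ≠ 0 := by positivity
  refine mul_left_cancel₀ hk ?_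
  rw [← h]; ring

lemma ring_choose_negone (k : ℕ) :
    Ring.choose (-1 : ℝ) k = (-1)^k := by
  have h := Ring.descPochhammer_eq_factorial_smul_choose (-1 : ℝ) k
  rw [desc_negone, nsmul_eq_mul] at h
  have hk : (k.factorial : ℝ) ≠ 0 := by positivity
  refine mul_left_cancel₀ hk ?_
  rw [← h]; ring

lemma central_conv (n : ℕ) :
    ∑ ij ∈ Finset.HasAntidiagonal.antidiagonal n, ((Nat.choose (2*ij.1) ij.1 : ℝ) * (Nat.choose (2*ij.2) ij.2))
      = 4^n := by
  have h := Ring.add_choose_eq (R := ℝ) (r := -(1/2)) (s := -(1/2)) n (Commute.all _ _)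
  have hl : (-(1/2) : ℝ) + (-(1/2)) = -1 := by norm_num
  rw [hl, ring_choose_negone] at h
  have hr : ∑ ij ∈ Finset.HasAntidiagonal.antidiagonal n, Ring.choose (-(1/2):ℝ) ij.1 * Ring.choose (-(1/2):ℝ) ij.2
      = (-(1/4))^n * ∑ ij ∈ Finset.HasAntidiagonal.antidiagonal n, ((Nat.choose (2*ij.1) ij.1 : ℝ) * (Nat.choose (2*ij.2) ij.2)) := by
    rw [Finset.mul_sum]
    refine Finset.sum_congr rfl fun ij hij => ?_
    rw [ring_choose_half, ring_choose_half]
    rw [Finset.HasAntidiagonal.mem_antidiagonal] at hij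
    rw [← hij, pow_add]
    ring
  rw [hr] at h
  have h4 : ((-(1/4):ℝ))^n ≠ 0 := by
    apply pow_ne_zero; norm_num
  refine mul_left_cancel₀ h4 ?_
  rw [← h, ← mul_pow]
  norm_num

lemma central_le (n : ℕ) : (Nat.choose (2*n) n : ℝ) ≤ 4^n := by
  have h : Nat.choose (2*n) n ≤ 2^(2*n) := by
    have h1 : Nat.choose (2*n) n ≤ ∑ k ∈ range (2*n+1), Nat.choose (2*n) k :=
      Finset.single_le_sum (f := fun k => Nat.choose (2*n) k) (fun k _ => Nat.zero_le _)
        (by simp only [Finset.mem_range]; omega)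
    rwa [Nat.sum_range_choose (2*n)] at h1
  have h2 : ((2:ℝ))^(2*n) = 4^n := by rw [pow_mul]; norm_num
  rw [← h2]
  exact_mod_cast h

lemma summable_central {x : ℝ} (hx0 : 0 ≤ x) (hx : x < 1/4) :
    Summable (fun n => (Nat.choose (2*n) n : ℝ) * x^n) := by
  refine Summable.of_nonneg_of_le (fun n => by positivity) (fun n => ?_)
    (summable_geometric_of_lt_one (by positivity) (by linarith : (4*x) < 1))
  rw [mul_pow]
  exact mul_le_mul_of_nonneg_right (central_le n) (by positivity)

lemma gen_fun {x : ℝ} (hx0 : 0 ≤ x) (hx : x < 1/4) :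
    (∑' n, (Nat.choose (2*n) n : ℝ) * x^n) = 1 / Real.sqrt (1 - 4*x) := by
  set f : ℕ → ℝ := fun n => (Nat.choose (2*n) n : ℝ) * x^n with hf
  have hsum : Summable f := summable_central hx0 hx
  have hnorm : Summable (fun n => ‖f n‖) := by
    refine hsum.congr fun n => ?_
    rw [Real.norm_eq_abs, abs_of_nonneg (by positivity)]
  have hprod : (∑' n, f n) * (∑' n, f n)
      = ∑' n, ∑ ij ∈ Finset.HasAntidiagonal.antidiagonal n, f ij.1 * f ij.2 :=
    tsum_mul_tsum_eq_tsum_sum_antidiagonal_of_summable_norm hnorm hnorm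
  have hconv : ∀ n, ∑ ij ∈ Finset.HasAntidiagonal.antidiagonal n, f ij.1 * f ij.2 = (4*x)^n := by
    intro n
    have : ∑ ij ∈ Finset.HasAntidiagonal.antidiagonal n, f ij.1 * f ij.2
        = (∑ ij ∈ Finset.HasAntidiagonal.antidiagonal n,
            ((Nat.choose (2*ij.1) ij.1 : ℝ) * (Nat.choose (2*ij.2) ij.2))) * x^n := by
      rw [Finset.sum_mul]
      refine Finset.sum_congr rfl fun ij hij => ?_
      rw [Finset.HasAntidiagonal.mem_antidiagonal] at hij
      simp only [hf, ← hij, pow_add]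
      ring
    rw [this, central_conv, mul_pow]
  have hgeo : (∑' n, (4*x)^n) = (1 - 4*x)⁻¹ :=
    tsum_geometric_of_lt_one (by positivity) (by linarith)
  have hsq : (∑' n, f n) * (∑' n, f n) = (1 - 4*x)⁻¹ := by
    rw [hprod, tsum_congr hconv, hgeo]
  have hpos : 0 ≤ ∑' n, f n := tsum_nonneg (fun n => by positivity)
  have h14 : (0:ℝ) < 1 - 4*x := by linarith
  have hstep : ∑' n, f n = Real.sqrt ((∑' n, f n) * (∑' n, f n)) :=
    (Real.sqrt_mul_self hpos).symm
  rw [hstep, hsq, Real.sqrt_inv, one_div]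
noncomputable def phi (t : ℝ) : ℝ :=
  2 / (Real.sqrt (1 - 4*t) * (1 + Real.sqrt (1 - 4*t)))

lemma hasSum_h {t : ℝ} (ht : t ∈ Ioo (0:ℝ) (1/4)) :
    HasSum (fun n => (Nat.choose (2*(n+1)) (n+1) : ℝ) * t^n / 2) (phi t) := by
  obtain ⟨ht0, ht4⟩ := ht
  set s := Real.sqrt (1 - 4*t) with hs
  have h14 : (0:ℝ) < 1 - 4*t := by linarith
  have hspos : 0 < s := Real.sqrt_pos.mpr h14
  have hssq : s^2 = 1 - 4*t := Real.sq_sqrt h14.le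
  have hS : HasSum (fun n => (Nat.choose (2*n) n : ℝ) * t^n) (1/s) := by
    have := (summable_central ht0.le ht4).hasSum
    rwa [gen_fun ht0.le ht4] at this
  have hshift : HasSum (fun n => (Nat.choose (2*(n+1)) (n+1) : ℝ) * t^(n+1)) (1/s - 1) := by
    refine (hasSum_nat_add_iff (f := fun n => (Nat.choose (2*n) n : ℝ) * t^n) 1).mpr ?_
    simpa using hS
  have ht0' : (2*t) ≠ 0 := by positivity
  have := hshift.div_const (2*t)
  have heq : ∀ n : ℕ, (Nat.choose (2*(n+1)) (n+1) : ℝ) * t^(n+1) / (2*t)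
      = (Nat.choose (2*(n+1)) (n+1) : ℝ) * t^n / 2 := by
    intro n
    rw [pow_succ]
    field_simp
  rw [funext heq] at this
  convert this using 1
  · rfl
  rw [phi, ← hs]
  have h1s : (1:ℝ) + s ≠ 0 := by positivity
  field_simp
  nlinarith [hssq]

lemma ftc_phi : (∫ t in (0:ℝ)..(1/4), phi t) = Real.log 2 ∧
    IntegrableOn phi (Ioo (0:ℝ) (1/4)) volume := by
  set G : ℝ → ℝ := fun t => Real.log 2 - Real.log (1 + Real.sqrt (1 - 4*t)) with hG
  have hcont : Continuous G := by
    have hc : Continuous fun t:ℝ => 1 + Real.sqrt (1 - 4*t) := by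
      continuity
    refine continuous_const.sub ?_
    refine continuous_iff_continuousAt.mpr fun t => ?_
    refine (Real.continuousAt_log ?_).comp hc.continuousAt
    have : 0 ≤ Real.sqrt (1 - 4*t) := Real.sqrt_nonneg _
    positivity
  have hderiv : ∀ t ∈ Ioo (0:ℝ) (1/4), HasDerivAt G (phi t) t := by
    intro t ht
    obtain ⟨ht0, ht4⟩ := ht
    have h14 : (0:ℝ) < 1 - 4*t := by linarith
    set s := Real.sqrt (1 - 4*t) with hs
    have hspos : 0 < s := Real.sqrt_pos.mpr h14
    have hssq : s^2 = 1 - 4*t := Real.sq_sqrt h14.le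
    have h1 : HasDerivAt (fun t:ℝ => 1 - 4*t) (-4) t := by
      simpa using ((hasDerivAt_id t).const_mul (4:ℝ)).const_sub 1
    have h2 : HasDerivAt (fun t:ℝ => Real.sqrt (1 - 4*t)) (1 / (2*s) * (-4)) t := by
      exact (Real.hasDerivAt_sqrt (ne_of_gt h14)).comp t h1
    have h3 : HasDerivAt (fun t:ℝ => 1 + Real.sqrt (1 - 4*t)) (1 / (2*s) * (-4)) t :=
      h2.const_add 1
    have h1s : (0:ℝ) < 1 + s := by positivity
    have h4 : HasDerivAt (fun t:ℝ => Real.log (1 + Real.sqrt (1 - 4*t)))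
        ((1 / (2*s) * (-4)) / (1 + s)) t := h3.log (ne_of_gt h1s)
    have h5 := h4.const_sub (Real.log 2)
    convert h5 using 1
    · rfl
    · rfl
    rw [phi, ← hs]
    field_simp
    ring
  have hpos : ∀ t ∈ Ioo (0:ℝ) (1/4), 0 ≤ phi t := by
    intro t ht
    obtain ⟨ht0, ht4⟩ := ht
    have h14 : (0:ℝ) < 1 - 4*t := by linarith
    have hspos : 0 < Real.sqrt (1 - 4*t) := Real.sqrt_pos.mpr h14
    rw [phi]
    positivity
  have hint : IntegrableOn phi (Ioo (0:ℝ) (1/4)) volume :=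
    (intervalIntegral.integrableOn_deriv_of_nonneg hcont.continuousOn hderiv hpos).mono_set
      Ioo_subset_Ioc_self
  refine ⟨?_, hint⟩
  have hii : IntervalIntegrable phi volume 0 (1/4) := by
    rw [intervalIntegrable_iff_integrableOn_Ioo_of_le (by norm_num)]
    exact hint
  rw [intervalIntegral.integral_eq_sub_of_hasDeriv_right_of_le (by norm_num)
    hcont.continuousOn (fun t ht => (hderiv t ht).hasDerivWithinAt) hii]
  have e1 : G (1/4) = Real.log 2 := by
    simp only [hG]
    norm_num
  have e0 : G 0 = 0 := by
    simp only [hG]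
    norm_num
  rw [e1, e0, sub_zero]

theorem log_two_series :
    Real.log 2
      = ∑' n : ℕ, (Nat.choose (2 * (n + 1)) (n + 1) : ℝ)
          / (((n : ℝ) + 1) * 2 ^ (2 * (n + 1) + 1)) := by
  set μ := volume.restrict (Ioo (0:ℝ) (1/4)) with hμ
  set h : ℕ → ℝ → ℝ := fun n t => (Nat.choose (2*(n+1)) (n+1) : ℝ) * t^n / 2 with hh
  set g : ℕ → ℝ := fun n => (Nat.choose (2 * (n + 1)) (n + 1) : ℝ)
          / (((n : ℝ) + 1) * 2 ^ (2 * (n + 1) + 1)) with hg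
  have hgnn : ∀ n, 0 ≤ g n := fun n => by positivity
  have hhc : ∀ n, Continuous (h n) := fun n => by fun_prop
  -- integral of h n
  have hint : ∀ n, Integrable (h n) μ := by
    intro n
    rw [hμ]
    exact ((hhc n).integrableOn_Icc (μ := volume) (a := 0) (b := 1/4)).mono_set Ioo_subset_Icc_self
  have hnn : ∀ n, 0 ≤ᵐ[μ] h n := by
    intro n
    rw [hμ]
    filter_upwards [ae_restrict_mem measurableSet_Ioo] with t ht
    have := ht.1
    simp only [hh, Pi.zero_apply]
    positivity
  have hval : ∀ n, ∫ t, h n t ∂μ = g n := by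
    intro n
    rw [hμ, ← MeasureTheory.integral_Ioc_eq_integral_Ioo,
      ← intervalIntegral.integral_of_le (by norm_num : (0:ℝ) ≤ 1/4)]
    simp only [hh]
    rw [intervalIntegral.integral_div, intervalIntegral.integral_const_mul, integral_pow]
    simp only [hg]
    rw [zero_pow (by omega), sub_zero]
    have h4 : ((2:ℝ))^(2*(n+1)+1) = 2 * 4^(n+1) := by
      rw [pow_succ, pow_mul]; norm_num; ring
    have hmix : ((1:ℝ)/4)^(n+1) * 4^(n+1) = 1 := by rw [← mul_pow]; norm_num
    have e2 : ((n:ℝ)+1) ≠ 0 := by positivity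
    rw [h4, div_eq_div_iff (by positivity) (by positivity)]
    calc ((Nat.choose (2*(n+1)) (n+1) : ℝ)) * ((1/4:ℝ)^(n+1) / ((n:ℝ)+1))
          * (((n:ℝ)+1) * (2 * 4^(n+1)))
        = ((Nat.choose (2*(n+1)) (n+1) : ℝ)) * ((1/4:ℝ)^(n+1) * 4^(n+1))
          * (((n:ℝ)+1)/((n:ℝ)+1)) * 2 := by ring
      _ = ((Nat.choose (2*(n+1)) (n+1) : ℝ)) * 2 := by rw [hmix, div_self e2]; ring
  -- lintegral identities
  have E2 : ∀ n, (∫⁻ t, ENNReal.ofReal (h n t) ∂μ) = ENNReal.ofReal (g n) := by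
    intro n
    rw [← MeasureTheory.ofReal_integral_eq_lintegral_ofReal (hint n) (hnn n), hval n]
  have E4 : ∀ᵐ t ∂μ, (∑' n, ENNReal.ofReal (h n t)) = ENNReal.ofReal (phi t) := by
    rw [hμ]
    filter_upwards [ae_restrict_mem measurableSet_Ioo] with t ht
    have hs := hasSum_h ht
    rw [← ENNReal.ofReal_tsum_of_nonneg (fun n => by have ht0 := ht.1.le; positivity)
      hs.summable, hs.tsum_eq]
  have E3 : (∑' n, ∫⁻ t, ENNReal.ofReal (h n t) ∂μ) = ∫⁻ t, ENNReal.ofReal (phi t) ∂μ := by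
    rw [← MeasureTheory.lintegral_tsum (fun n => ((hhc n).measurable.ennreal_ofReal).aemeasurable)]
    exact lintegral_congr_ae E4
  have E5 : (∫⁻ t, ENNReal.ofReal (phi t) ∂μ) = ENNReal.ofReal (Real.log 2) := by
    have hphint : Integrable phi μ := by rw [hμ]; exact ftc_phi.2
    have hphinn : 0 ≤ᵐ[μ] phi := by
      rw [hμ]
      filter_upwards [ae_restrict_mem measurableSet_Ioo] with t ht
      obtain ⟨ht0, ht4⟩ := ht
      have h14 : (0:ℝ) < 1 - 4*t := by linarith
      have := Real.sqrt_pos.mpr h14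
      simp only [phi, Pi.zero_apply]
      positivity
    rw [← MeasureTheory.ofReal_integral_eq_lintegral_ofReal hphint hphinn]
    congr 1
    rw [hμ, ← MeasureTheory.integral_Ioc_eq_integral_Ioo,
      ← intervalIntegral.integral_of_le (by norm_num : (0:ℝ) ≤ 1/4)]
    exact ftc_phi.1
  have key : (∑' n, ENNReal.ofReal (g n)) = ENNReal.ofReal (Real.log 2) := by
    rw [← funext E2, E3, E5]
  have hgsum : Summable g := by
    have hne : (∑' n, ENNReal.ofReal (g n)) ≠ ⊤ := by
      rw [key]; exact ENNReal.ofReal_ne_top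
    have := ENNReal.summable_toReal hne
    refine this.congr fun n => ?_
    rw [ENNReal.toReal_ofReal (hgnn n)]
  have : ENNReal.ofReal (∑' n, g n) = ENNReal.ofReal (Real.log 2) := by
    rw [ENNReal.ofReal_tsum_of_nonneg hgnn hgsum, key]
  have hfin : (∑' n, g n) = Real.log 2 := by
    have h1 : 0 ≤ ∑' n, g n := tsum_nonneg hgnn
    have h2 : (0:ℝ) ≤ Real.log 2 := Real.log_nonneg (by norm_num)
    rwa [ENNReal.ofReal_eq_ofReal_iff h1 h2] at this
  exact hfin.symm
end
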